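/- Let p ≥ n > 1 be real and let B_{pn} := max over (z,u) ∈ [0,4] × [0,1] of b_{pn}(z,u) (continuous extension as defined). Then for all nonzero h, ℓ ∈ ℝ^d, |h+ℓ|^{2p} sin² θ_{hℓ} / (|h|^p |ℓ|^n + |h|^n |ℓ|^p)² ≤ (B_{pn}/8) (1/|h|^{2n} + 1/|ℓ|^{2n}). -/

import Mathlib

/-!
Put `u = ‖h‖ / (‖h‖ + ‖ℓ‖)` and `z = 2 (1 - cos θ_{hℓ})`. Both sides are homogeneous, so
dividing `‖h‖`, `‖ℓ‖` and `‖h + ℓ‖² = ‖h‖² + 2‖h‖‖ℓ‖cos θ + ‖ℓ‖²` by `‖h‖ + ‖ℓ‖` turns the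
left-hand side exactly into `b_{pn}(z,u)/8 · (‖h‖^{-2n} + ‖ℓ‖^{-2n})`.
It remains to check that `b_{pn}` is bounded on `[0,4] × [0,1]`, since otherwise `sSup` would be
the junk value `0`. For `p ≥ 0` we have `(1 - zu(1-u))^p ≤ 1`, and `max(u^p, (1-u)^p) ≥ 2^{-p}`
controls the denominator, so `b_{pn} ≤ 8 · 4^p`.
-/

open scoped BigOperators
noncomputable section

/-- Kronecker delta `δ_{pn}`. -/
def kdelta (p n : ℝ) : ℝ := if p = n then 1 else 0

/-- The function `b_{pn}` on `[0,4] × [0,1]`, extended by its boundary values at `u = 0, 1`. -/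
def bpn (p n : ℝ) (z u : ℝ) : ℝ :=
  if u = 0 ∨ u = 1 then 2 * z * (4 - z) / (1 + 3 * kdelta p n)
  else 2 * z * (4 - z) * (1 - u) ^ (2 * n) * u ^ (2 * n) * (1 - z * u + z * u ^ 2) ^ p /
    (((1 - u) ^ (2 * n) + u ^ (2 * n)) *
      ((1 - u) ^ p * u ^ n + (1 - u) ^ n * u ^ p) ^ 2)

/-- `B_{pn}`, the maximum of `b_{pn}` over `[0,4] × [0,1]`. -/
def Bpn (p n : ℝ) : ℝ :=
  sSup ((fun zu : ℝ × ℝ => bpn p n zu.1 zu.2) '' (Set.Icc (0 : ℝ) 4 ×ˢ Set.Icc (0 : ℝ) 1))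

open Real InnerProductGeometry Set

lemma rpow_two_mul_eq_sq {x : ℝ} (hx : 0 ≤ x) (t : ℝ) : x ^ (2 * t) = (x ^ t) ^ 2 := by
  rw [mul_comm, rpow_mul hx, rpow_two]

lemma sq_mul_sq_mul_max_sq_le {A B P Q : ℝ} (hA : 0 ≤ A) (hB : 0 ≤ B) (hP : 0 ≤ P)
    (hQ : 0 ≤ Q) : A ^ 2 * B ^ 2 * max P Q ^ 2 ≤ (A ^ 2 + B ^ 2) * (Q * A + B * P) ^ 2 := by
  have hQA : (Q * A) ^ 2 ≤ (Q * A + B * P) ^ 2 := by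
    gcongr; exact le_add_of_nonneg_right (by positivity)
  have hBP : (B * P) ^ 2 ≤ (Q * A + B * P) ^ 2 := by
    gcongr; exact le_add_of_nonneg_left (by positivity)
  have hsq : 0 ≤ (Q * A + B * P) ^ 2 := sq_nonneg _
  rcases le_total P Q with hPQ | hPQ
  · rw [max_eq_right hPQ]
    nlinarith [mul_le_mul_of_nonneg_left hQA (sq_nonneg B), mul_nonneg (sq_nonneg A) hsq]
  · rw [max_eq_left hPQ]
    nlinarith [mul_le_mul_of_nonneg_left hBP (sq_nonneg A), mul_nonneg (sq_nonneg B) hsq]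

lemma one_le_two_rpow_mul_max {p u : ℝ} (hp : 0 ≤ p) (hu : u ∈ Icc (0 : ℝ) 1) :
    1 ≤ 2 ^ p * max (u ^ p) ((1 - u) ^ p) := by
  rcases le_total u (1 / 2) with h | h
  · calc (1 : ℝ) ≤ (2 * (1 - u)) ^ p := one_le_rpow (by linarith) hp
      _ ≤ 2 ^ p * max (u ^ p) ((1 - u) ^ p) := by
        rw [mul_rpow zero_le_two (by linarith [hu.2])]; gcongr; exact le_max_right _ _
  · calc (1 : ℝ) ≤ (2 * u) ^ p := one_le_rpow (by linarith) hp
      _ ≤ 2 ^ p * max (u ^ p) ((1 - u) ^ p) := by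
        rw [mul_rpow zero_le_two hu.1]; gcongr; exact le_max_left _ _

lemma one_sub_mul_add_mul_sq_mem_Icc {z u : ℝ} (hz : z ∈ Icc (0 : ℝ) 4)
    (hu : u ∈ Icc (0 : ℝ) 1) : 1 - z * u + z * u ^ 2 ∈ Icc (0 : ℝ) 1 := by
  have huv : 0 ≤ u * (1 - u) := mul_nonneg hu.1 (by linarith [hu.2])
  constructor
  · nlinarith [sq_nonneg (2 * u - 1), mul_nonneg (sub_nonneg.2 hz.2) huv]
  · nlinarith [mul_nonneg hz.1 huv]

section bpn

variable {p n z u : ℝ}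

lemma bpn_of_mem_Ioo (hu : u ∈ Ioo 0 1) :
    bpn p n z u = 2 * z * (4 - z) * (1 - u) ^ (2 * n) * u ^ (2 * n) * (1 - z * u + z * u ^ 2) ^ p /
      (((1 - u) ^ (2 * n) + u ^ (2 * n)) * ((1 - u) ^ p * u ^ n + (1 - u) ^ n * u ^ p) ^ 2) :=
  if_neg (by rintro (h | h) <;> linarith [h ▸ hu.1, h ▸ hu.2])

lemma bpn_le (hp : 0 ≤ p) (hz : z ∈ Icc (0 : ℝ) 4) (hu : u ∈ Icc (0 : ℝ) 1) :
    bpn p n z u ≤ 8 * 4 ^ p := by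
  have hz8 : 2 * z * (4 - z) ≤ 8 := by nlinarith [sq_nonneg (z - 2)]
  have hz0 : 0 ≤ 2 * z * (4 - z) := by nlinarith [hz.1, hz.2]
  by_cases hu' : u = 0 ∨ u = 1
  · have hδ : (1 : ℝ) ≤ 1 + 3 * kdelta p n := by unfold kdelta; split_ifs <;> norm_num
    calc bpn p n z u = 2 * z * (4 - z) / (1 + 3 * kdelta p n) := if_pos hu'
      _ ≤ 2 * z * (4 - z) := div_le_self hz0 hδ
      _ ≤ 8 * 4 ^ p := by nlinarith [one_le_rpow (by norm_num : (1 : ℝ) ≤ 4) hp]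
  have hu_Ioo : u ∈ Ioo 0 1 := by
    push Not at hu'
    exact ⟨hu.1.lt_of_ne' hu'.1, hu.2.lt_of_ne hu'.2⟩
  have hv : 0 < 1 - u := sub_pos.2 hu_Ioo.2
  have hun := rpow_pos_of_pos hu_Ioo.1 n
  have hvn := rpow_pos_of_pos hv n
  obtain ⟨hw0, hw1⟩ := one_sub_mul_add_mul_sq_mem_Icc hz hu
  have hwp : (1 - z * u + z * u ^ 2) ^ p ≤ 1 := rpow_le_one hw0 hw1 hp
  have hmax : 1 ≤ 4 ^ p * max (u ^ p) ((1 - u) ^ p) ^ 2 := by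
    have h4 : (4 : ℝ) ^ p = (2 ^ p) ^ 2 := by
      rw [sq, ← mul_rpow zero_le_two zero_le_two]; norm_num
    rw [h4, ← mul_pow]
    exact one_le_pow₀ (one_le_two_rpow_mul_max hp hu)
  have hden := sq_mul_sq_mul_max_sq_le hun.le hvn.le (rpow_nonneg hu.1 p) (rpow_nonneg hv.le p)
  have hAB := mul_nonneg (sq_nonneg (u ^ n)) (sq_nonneg ((1 - u) ^ n))
  rw [bpn_of_mem_Ioo hu_Ioo, rpow_two_mul_eq_sq hu.1, rpow_two_mul_eq_sq hv.le,
    div_le_iff₀ (mul_pos (by positivity) (pow_pos (add_pos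
      (mul_pos (rpow_pos_of_pos hv p) hun) (mul_pos hvn (rpow_pos_of_pos hu_Ioo.1 p))) 2))]
  calc 2 * z * (4 - z) * ((1 - u) ^ n) ^ 2 * (u ^ n) ^ 2 * (1 - z * u + z * u ^ 2) ^ p
      ≤ 8 * ((u ^ n) ^ 2 * ((1 - u) ^ n) ^ 2) := by
        nlinarith [mul_le_mul hz8 hwp (rpow_nonneg hw0 p) (by norm_num)]
    _ ≤ 8 * 4 ^ p * ((u ^ n) ^ 2 * ((1 - u) ^ n) ^ 2 * max (u ^ p) ((1 - u) ^ p) ^ 2) := by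
        nlinarith [mul_le_mul_of_nonneg_left hmax hAB]
    _ ≤ _ := by rw [add_comm (((1 - u) ^ n) ^ 2)]; gcongr

lemma bpn_le_Bpn (hp : 0 ≤ p) (hz : z ∈ Icc (0 : ℝ) 4) (hu : u ∈ Icc (0 : ℝ) 1) :
    bpn p n z u ≤ Bpn p n := by
  refine le_csSup ⟨8 * 4 ^ p, ?_⟩ ⟨(z, u), ⟨hz, hu⟩, rfl⟩
  rintro _ ⟨⟨z', u'⟩, ⟨hz', hu'⟩, rfl⟩
  exact bpn_le hp hz' hu'

lemma rpow_mul_one_sub_sq_div_eq_bpn {a b c : ℝ} (ha : 0 < a) (hb : 0 < b) (hc : -1 ≤ c) :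
    (a ^ 2 + 2 * (a * b * c) + b ^ 2) ^ p * (1 - c ^ 2) / (a ^ p * b ^ n + a ^ n * b ^ p) ^ 2 =
      bpn p n (2 * (1 - c)) (a / (a + b)) / 8 * (1 / a ^ (2 * n) + 1 / b ^ (2 * n)) := by
  have hs : 0 < a + b := add_pos ha hb
  have hq : 0 ≤ a ^ 2 + 2 * (a * b * c) + b ^ 2 := by
    nlinarith [sq_nonneg (a - b), mul_pos ha hb]
  have hu : a / (a + b) ∈ Ioo 0 1 := ⟨div_pos ha hs, (div_lt_one hs).2 (by linarith)⟩
  have hv : 1 - a / (a + b) = b / (a + b) := by field_simp; ring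
  have hw : 1 - 2 * (1 - c) * (a / (a + b)) + 2 * (1 - c) * (a / (a + b)) ^ 2 =
      (a ^ 2 + 2 * (a * b * c) + b ^ 2) / (a + b) ^ 2 := by field_simp; ring
  rw [bpn_of_mem_Ioo hu, hv, hw, div_rpow hq (by positivity), div_rpow ha.le hs.le,
    div_rpow ha.le hs.le, div_rpow hb.le hs.le, div_rpow hb.le hs.le, div_rpow ha.le hs.le,
    div_rpow hb.le hs.le, ← rpow_pow_comm hs.le p 2, rpow_two_mul_eq_sq ha.le,
    rpow_two_mul_eq_sq hb.le, rpow_two_mul_eq_sq hs.le]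
  have := rpow_pos_of_pos ha n
  have := rpow_pos_of_pos hb n
  have := rpow_pos_of_pos ha p
  have := rpow_pos_of_pos hb p
  have := rpow_pos_of_pos hs n
  have := rpow_pos_of_pos hs p
  field_simp
  ring

end bpn

lemma norm_add_rpow_two_mul {V : Type*} [NormedAddCommGroup V] [InnerProductSpace ℝ V]
    (x y : V) (p : ℝ) :
    ‖x + y‖ ^ (2 * p) = (‖x‖ ^ 2 + 2 * (‖x‖ * ‖y‖ * cos (angle x y)) + ‖y‖ ^ 2) ^ p := by
  rw [rpow_mul (norm_nonneg _), rpow_two, norm_add_sq_real, ← cos_angle_mul_norm_mul_norm,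
    mul_comm (cos _)]

/-- For real `p ≥ n > 1` and all nonzero `h, ℓ ∈ ℝ^d`,
`|h+ℓ|^{2p} sin² θ_{hℓ} / (|h|^p|ℓ|^n + |h|^n|ℓ|^p)² ≤ (B_{pn}/8)(|h|^{-2n} + |ℓ|^{-2n})`. -/
theorem Bpn_bound (d : ℕ) (p n : ℝ) (hpn : n ≤ p) (hn : 1 < n)
    (h ℓ : EuclideanSpace ℝ (Fin d)) (hh : h ≠ 0) (hℓ : ℓ ≠ 0) :
    ‖h + ℓ‖ ^ (2 * p) * Real.sin (InnerProductGeometry.angle h ℓ) ^ 2 /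
        (‖h‖ ^ p * ‖ℓ‖ ^ n + ‖h‖ ^ n * ‖ℓ‖ ^ p) ^ 2 ≤
      Bpn p n / 8 * (1 / ‖h‖ ^ (2 * n) + 1 / ‖ℓ‖ ^ (2 * n)) := by
  have ha : 0 < ‖h‖ := norm_pos_iff.mpr hh
  have hb : 0 < ‖ℓ‖ := norm_pos_iff.mpr hℓ
  have hc : cos (angle h ℓ) ∈ Icc (-1) 1 := ⟨neg_one_le_cos _, cos_le_one _⟩
  rw [norm_add_rpow_two_mul, sin_sq, rpow_mul_one_sub_sq_div_eq_bpn ha hb hc.1]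
  gcongr
  refine bpn_le_Bpn (by linarith) ⟨by linarith [hc.2], by linarith [hc.1]⟩ ⟨by positivity, ?_⟩
  exact (div_le_one (add_pos ha hb)).2 (by linarith)
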